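/- In one coupled step of the path coupling, fix a path (v₀, v₁, …, v_ℓ) in G of length ℓ ≥ 1 and a color c* ∈ {r,b}. The probability of the event that v_i ∈ F^i for all 1 ≤ i ≤ ℓ−1, node v_ℓ is marked, and c^X_{v_ℓ} = c*, is at most (2γ/q)^{ℓ−1} · (γ/q). -/
import Mathlib


open Finset

attribute [local instance] Classical.propDecidable

namespace LGCoupling

/-- Data of the path coupling of the Local Glauber dynamics: a graph `G`, `q` colors,
the two special colors `r ≠ b`, the distinguished node `v₀`, and two colorings `X, Y`
agreeing everywhere except at `v₀`, where `X v₀ = r` and `Y v₀ = b`. -/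
structure Setup (V : Type*) where
  G : SimpleGraph V
  q : ℕ
  r : Fin q
  b : Fin q
  v0 : V
  X : V → Fin q
  Y : V → Fin q

/-- The assumptions on the pair of colorings in the path coupling. -/
def Setup.Valid {V : Type*} (s : Setup V) : Prop :=
  s.r ≠ s.b ∧ s.X s.v0 = s.r ∧ s.Y s.v0 = s.b ∧ ∀ v : V, v ≠ s.v0 → s.X v = s.Y v

variable {V : Type*} [Fintype V] [DecidableEq V]

/-- The neighborhood `N(v)` of `v` as a finset. -/
noncomputable def nbrs (G : SimpleGraph V) (v : V) : Finset V :=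
  univ.filter (fun w => G.Adj v w)

/-- The acceptance condition of the Local Glauber rule at node `v`, for current coloring `σ`
and proposals `c`: `c v ∉ ⋃_{u ∈ N(v)} {σ u, c u}` and `c u ∉ {σ v, c v}` for all `u ∈ N(v)`. -/
def Accept (G : SimpleGraph V) {q : ℕ} (σ c : V → Fin q) (v : V) : Prop :=
  ∀ u : V, G.Adj v u → c v ≠ σ u ∧ c v ≠ c u ∧ c u ≠ σ v ∧ c u ≠ c v

/-- One step of the Local Glauber rule, given proposals `c`. -/
noncomputable def stepFn (G : SimpleGraph V) {q : ℕ} (σ c : V → Fin q) : V → Fin q :=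
  fun v => if Accept G σ c v then c v else σ v

/-- `B = {v ≠ v₀ : X v ∈ {r, b}}`. -/
noncomputable def Bset (s : Setup V) : Finset V :=
  univ.filter (fun v => v ≠ s.v0 ∧ (s.X v = s.r ∨ s.X v = s.b))

/-- `K = (⋃_{v ∈ B} N⁺(v)) \ {v₀}`. -/
noncomputable def Kset (s : Setup V) : Finset V :=
  ((Bset s).biUnion (fun v => insert v (nbrs s.G v))).erase s.v0

/-- `S`: the marked nodes outside `K`. -/
noncomputable def Sset (s : Setup V) (m : V → Bool) : Finset V :=
  univ.filter (fun v => m v = true ∧ v ∉ Kset s)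

/-- Auxiliary breadth-first layering: `(layersAux s m u d).1 = M^d` and
`(layersAux s m u d).2 = ⋃_{i ≤ d} M^i`.  Here `M⁰ = F⁰ = {v₀}`,
`F^d = {v ∈ M^d : u v ∈ {r,b}}` for `d ≥ 1` (a node of `M^d`, `d ≥ 1`, samples mirroredly,
so it has flipped proposals exactly when its uniform draw `u v` is red or blue), and
`M^{d+1} = (N(F^d) ∩ S) \ ⋃_{i ≤ d} M^i`. -/
noncomputable def layersAux (s : Setup V) (m : V → Bool) (u : V → Fin s.q) :
    ℕ → Finset V × Finset V
  | 0 => ({s.v0}, {s.v0})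
  | d + 1 =>
      let prev := layersAux s m u d
      let F : Finset V :=
        if d = 0 then {s.v0} else prev.1.filter (fun v => u v = s.r ∨ u v = s.b)
      let Mnext : Finset V := ((F.biUnion (fun w => nbrs s.G w)) ∩ Sset s m) \ prev.2
      (Mnext, prev.2 ∪ Mnext)

/-- The breadth-first layer `M^d`. -/
noncomputable def layerM (s : Setup V) (m : V → Bool) (u : V → Fin s.q) (d : ℕ) : Finset V :=
  (layersAux s m u d).1

/-- The set `F^d ⊆ M^d` of nodes with flipped proposals (`F⁰ = {v₀}`). -/
noncomputable def layerF (s : Setup V) (m : V → Bool) (u : V → Fin s.q) (d : ℕ) : Finset V :=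
  if d = 0 then {s.v0} else (layerM s m u d).filter (fun v => u v = s.r ∨ u v = s.b)

/-- A node samples its proposals mirroredly iff it lies in a layer `M^d` with `d ≥ 1`. -/
def Mirrored (s : Setup V) (m : V → Bool) (u : V → Fin s.q) (v : V) : Prop :=
  ∃ d : ℕ, 1 ≤ d ∧ v ∈ layerM s m u d

/-- Exchange red and blue, leaving all other colors fixed. -/
noncomputable def flipRB (s : Setup V) (c : Fin s.q) : Fin s.q :=
  if c = s.r then s.b else if c = s.b then s.r else c

/-- Proposal of node `v` in chain `X`: its uniform draw `u v` if marked
(both consistent and mirrored sampling propose the draw itself in chain `X`),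
and its current color otherwise. -/
noncomputable def cX (s : Setup V) (m : V → Bool) (u : V → Fin s.q) : V → Fin s.q :=
  fun v => if m v then u v else s.X v

/-- Proposal of node `v` in chain `Y`: for a marked node, the draw `u v`, with red and blue
exchanged when `v` samples mirroredly; the current color if unmarked. -/
noncomputable def cY (s : Setup V) (m : V → Bool) (u : V → Fin s.q) : V → Fin s.q :=
  fun v => if m v then (if Mirrored s m u v then flipRB s (u v) else u v) else s.Y v

/-- The coloring `X'` after one coupled step. -/
noncomputable def X' (s : Setup V) (m : V → Bool) (u : V → Fin s.q) : V → Fin s.q :=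
  stepFn s.G s.X (cX s m u)

/-- The coloring `Y'` after one coupled step. -/
noncomputable def Y' (s : Setup V) (m : V → Bool) (u : V → Fin s.q) : V → Fin s.q :=
  stepFn s.G s.Y (cY s m u)

/-- Probability weight of the randomness `(m, u)` of one coupled step: each node is marked
independently with probability `γ`, and each node makes one independent uniform draw in `[q]`. -/
noncomputable def weight (γ : ℝ) (s : Setup V) (m : V → Bool) : ℝ :=
  (∏ v : V, (if m v then γ else 1 - γ)) * ((1 : ℝ) / s.q) ^ (Fintype.card V)

end LGCoupling


section AuxLemmas
open LGCoupling
variable {V : Type*} [Fintype V] [DecidableEq V]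

lemma LG_sum_fun_prod {α : Type*} [Fintype α] (h : V → α → ℝ) :
    ∑ g : V → α, ∏ v, h v (g v) = ∏ v, ∑ a, h v a := by
  rw [Finset.prod_univ_sum, Fintype.piFinset_univ]

lemma LG_mark_sum (γ : ℝ) (A : Finset V) :
    ∑ m : V → Bool, (if ∀ v ∈ A, m v = true then ∏ v : V, (if m v then γ else 1 - γ) else 0)
      = γ ^ A.card := by
  have key : ∀ m : V → Bool,
      (if ∀ v ∈ A, m v = true then ∏ v : V, (if m v then γ else 1 - γ) else 0)
      = ∏ v : V, (if v ∈ A ∧ m v = false then 0 else (if m v then γ else 1 - γ)) := by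
    intro m
    by_cases h : ∀ v ∈ A, m v = true
    · rw [if_pos h]
      refine Finset.prod_congr rfl fun v _ => ?_
      have hnc : ¬ (v ∈ A ∧ m v = false) := by
        rintro ⟨hv, hf⟩; rw [h v hv] at hf; simp at hf
      rw [if_neg hnc]
    · rw [if_neg h]
      push_neg at h
      obtain ⟨v, hv, hf⟩ := h
      refine (Finset.prod_eq_zero (Finset.mem_univ v) ?_).symm
      simp only [Bool.not_eq_true] at hf
      rw [if_pos ⟨hv, hf⟩]
  simp_rw [key]
  rw [LG_sum_fun_prod (fun v a => if v ∈ A ∧ a = false then 0 else if a = true then γ else 1 - γ)]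
  have h2 : ∀ v : V,
      (∑ b : Bool, if v ∈ A ∧ b = false then 0 else (if b then γ else 1 - γ))
        = if v ∈ A then γ else 1 := by
    intro v
    by_cases hv : v ∈ A <;> simp [hv] <;> ring
  simp_rw [h2]
  rw [Finset.prod_ite_mem, Finset.univ_inter, Finset.prod_const]

lemma LG_draw_sum (q : ℕ) (T : V → Finset (Fin q)) :
    ∑ u : V → Fin q, (if ∀ v : V, u v ∈ T v then ((1 : ℝ)/q) ^ (Fintype.card V) else 0)
      = ∏ v : V, ((T v).card : ℝ) / q := by
  have key : ∀ u : V → Fin q,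
      (if ∀ v : V, u v ∈ T v then ((1 : ℝ)/q) ^ (Fintype.card V) else 0)
      = ∏ v : V, (if u v ∈ T v then (1 : ℝ)/q else 0) := by
    intro u
    by_cases h : ∀ v, u v ∈ T v
    · rw [if_pos h, Finset.prod_congr rfl (fun v _ => if_pos (h v)),
        Finset.prod_const, Finset.card_univ]
    · rw [if_neg h]
      push_neg at h
      obtain ⟨v, hv⟩ := h
      exact (Finset.prod_eq_zero (Finset.mem_univ v)
        (if_neg hv : (if u v ∈ T v then (1 : ℝ)/q else 0) = 0)).symm
  simp_rw [key]
  rw [LG_sum_fun_prod (fun v a => if a ∈ T v then (1 : ℝ)/q else 0)]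
  refine Finset.prod_congr rfl fun v _ => ?_
  rw [Finset.sum_ite_mem, Finset.univ_inter, Finset.sum_const, nsmul_eq_mul, mul_one_div]

lemma LG_layerM_marked (s : Setup V) (m : V → Bool) (u : V → Fin s.q) {v : V} {d : ℕ}
    (hd : 1 ≤ d) (hv : v ∈ layerM s m u d) : m v = true := by
  obtain ⟨e, rfl⟩ : ∃ e, d = e + 1 := ⟨d - 1, (Nat.succ_pred_eq_of_pos hd).symm⟩
  have hv' : v ∈ ((((if e = 0 then ({s.v0} : Finset V) else
      (layersAux s m u e).1.filter (fun w => u w = s.r ∨ u w = s.b))).biUnion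
      (fun w => nbrs s.G w)) ∩ Sset s m) \ (layersAux s m u e).2 := hv
  have h2 : v ∈ Sset s m := (Finset.mem_inter.1 (Finset.mem_sdiff.1 hv').1).2
  simp only [Sset, Finset.mem_filter] at h2
  exact h2.2.1

end AuxLemmas

open LGCoupling in
/-- fix a path `(v₀, v₁, …, v_ℓ)` in `G` of length `ℓ ≥ 1` and a color
`c* ∈ {r, b}`. The probability that `v_i ∈ F^i` for all `1 ≤ i ≤ ℓ − 1`, node `v_ℓ` is
marked, and `c^X_{v_ℓ} = c*`, is at most `(2γ/q)^{ℓ−1} · (γ/q)`. -/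
theorem path_event_probability {V : Type*} [Fintype V] [DecidableEq V]
    (s : Setup V) (hs : s.Valid) (γ : ℝ) (hγ0 : 0 < γ) (hγ1 : γ < 1) (hq : 1 ≤ s.q)
    (ℓ : ℕ) (hℓ : 1 ≤ ℓ) (p : ℕ → V)
    (hp0 : p 0 = s.v0)
    (hadj : ∀ i : ℕ, i < ℓ → s.G.Adj (p i) (p (i + 1)))
    (hinj : ∀ i : ℕ, i ≤ ℓ → ∀ j : ℕ, j ≤ ℓ → p i = p j → i = j)
    (cstar : Fin s.q) (hcstar : cstar = s.r ∨ cstar = s.b) :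
    (∑ m : V → Bool, ∑ u : V → Fin s.q,
        if (∀ i : ℕ, 1 ≤ i → i ≤ ℓ - 1 → p i ∈ layerF s m u i) ∧
            m (p ℓ) = true ∧ cX s m u (p ℓ) = cstar
        then weight γ s m else 0)
      ≤ (2 * γ / s.q) ^ (ℓ - 1) * (γ / s.q) := by
  obtain ⟨hrb, hXr, hYb, hagree⟩ := hs
  classical
  set A : Finset V := (Finset.Icc 1 ℓ).image p with hA
  set B2 : Finset V := (Finset.Icc 1 (ℓ - 1)).image p with hB2
  have hcardA : A.card = ℓ := by
    rw [hA, Finset.card_image_of_injOn, Nat.card_Icc]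
    · omega
    · intro i hi j hj hij
      simp only [Finset.coe_Icc, Set.mem_Icc] at hi hj
      exact hinj i hi.2 j hj.2 hij
  have hplB2 : p ℓ ∉ B2 := by
    rw [hB2]
    simp only [Finset.mem_image, Finset.mem_Icc, not_exists]
    rintro i ⟨⟨hi1, hi2⟩, hpe⟩
    have := hinj i (le_trans hi2 (Nat.sub_le _ _)) ℓ le_rfl hpe
    omega
  have hcardB2 : B2.card = ℓ - 1 := by
    rw [hB2, Finset.card_image_of_injOn, Nat.card_Icc]
    · omega
    · intro i hi j hj hij
      simp only [Finset.coe_Icc, Set.mem_Icc] at hi hj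
      exact hinj i (le_trans hi.2 (Nat.sub_le _ _)) j (le_trans hj.2 (Nat.sub_le _ _)) hij
  set T : V → Finset (Fin s.q) :=
    fun v => if v = p ℓ then {cstar} else if v ∈ B2 then {s.r, s.b} else Finset.univ with hT
  have step1 : (∑ m : V → Bool, ∑ u : V → Fin s.q,
        if (∀ i : ℕ, 1 ≤ i → i ≤ ℓ - 1 → p i ∈ layerF s m u i) ∧
            m (p ℓ) = true ∧ cX s m u (p ℓ) = cstar
        then weight γ s m else 0)
      ≤ ∑ m : V → Bool, ∑ u : V → Fin s.q,
          (if ∀ v ∈ A, m v = true then ∏ v : V, (if m v then γ else 1 - γ) else 0) *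
          (if ∀ v : V, u v ∈ T v then ((1 : ℝ)/s.q) ^ (Fintype.card V) else 0) := by
    refine Finset.sum_le_sum fun m _ => Finset.sum_le_sum fun u _ => ?_
    by_cases hE : (∀ i : ℕ, 1 ≤ i → i ≤ ℓ - 1 → p i ∈ layerF s m u i) ∧
        m (p ℓ) = true ∧ cX s m u (p ℓ) = cstar
    · rw [if_pos hE]
      obtain ⟨hF, hml, hcl⟩ := hE
      have hmemM : ∀ i : ℕ, 1 ≤ i → i ≤ ℓ - 1 →
          p i ∈ layerM s m u i ∧ (u (p i) = s.r ∨ u (p i) = s.b) := by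
        intro i hi1 hi2
        have h := hF i hi1 hi2
        rw [layerF, if_neg (by omega : ¬ i = 0)] at h
        exact ⟨(Finset.mem_filter.1 h).1, (Finset.mem_filter.1 h).2⟩
      have hm : ∀ v ∈ A, m v = true := by
        intro v hv
        rw [hA] at hv
        simp only [Finset.mem_image, Finset.mem_Icc] at hv
        obtain ⟨i, ⟨hi1, hi2⟩, rfl⟩ := hv
        rcases eq_or_lt_of_le hi2 with h | h
        · rw [h]; exact hml
        · exact LG_layerM_marked s m u hi1 (hmemM i hi1 (by omega)).1
      have hu : ∀ v : V, u v ∈ T v := by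
        intro v
        simp only [hT]
        by_cases hvl : v = p ℓ
        · rw [if_pos hvl, hvl, Finset.mem_singleton]
          rw [cX] at hcl
          simp only [hml, if_true] at hcl
          exact hcl
        · rw [if_neg hvl]
          by_cases hvB : v ∈ B2
          · rw [if_pos hvB]
            have hv2 := hvB
            rw [hB2] at hv2
            simp only [Finset.mem_image, Finset.mem_Icc] at hv2
            obtain ⟨i, ⟨hi1, hi2⟩, rfl⟩ := hv2
            rcases (hmemM i hi1 hi2).2 with h | h <;> simp [h]
          · rw [if_neg hvB]; exact Finset.mem_univ _
      rw [if_pos hm, if_pos hu]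
      exact le_of_eq rfl
    · rw [if_neg hE]
      refine mul_nonneg ?_ ?_
      · split_ifs with h
        · refine Finset.prod_nonneg fun v _ => ?_
          split_ifs <;> linarith
        · exact le_rfl
      · split_ifs with h
        · positivity
        · exact le_rfl
  refine le_trans step1 ?_
  have hfact : (∑ m : V → Bool, ∑ u : V → Fin s.q,
          (if ∀ v ∈ A, m v = true then ∏ v : V, (if m v then γ else 1 - γ) else 0) *
          (if ∀ v : V, u v ∈ T v then ((1 : ℝ)/s.q) ^ (Fintype.card V) else 0))
      = (∑ m : V → Bool,
          (if ∀ v ∈ A, m v = true then ∏ v : V, (if m v then γ else 1 - γ) else 0)) *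
        (∑ u : V → Fin s.q,
          (if ∀ v : V, u v ∈ T v then ((1 : ℝ)/s.q) ^ (Fintype.card V) else 0)) := by
    rw [Finset.sum_mul_sum]
  rw [hfact, LG_mark_sum, LG_draw_sum, hcardA]
  have hq0 : (0 : ℝ) < (s.q : ℝ) := by exact_mod_cast Nat.lt_of_lt_of_le Nat.zero_lt_one hq
  have hprod : (∏ v : V, ((T v).card : ℝ) / s.q) = (1 / s.q) * (2 / s.q) ^ (ℓ - 1) := by
    rw [← Finset.prod_sdiff (Finset.subset_univ (insert (p ℓ) B2))]
    have h1 : (∏ v ∈ Finset.univ \ insert (p ℓ) B2, ((T v).card : ℝ) / s.q) = 1 := by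
      refine Finset.prod_eq_one fun v hv => ?_
      simp only [Finset.mem_sdiff, Finset.mem_insert, not_or] at hv
      simp only [hT, if_neg hv.2.1, if_neg hv.2.2, Finset.card_univ, Fintype.card_fin]
      exact div_self (ne_of_gt hq0)
    have h2 : (∏ v ∈ insert (p ℓ) B2, ((T v).card : ℝ) / s.q)
        = (1 / s.q) * (2 / s.q) ^ (ℓ - 1) := by
      rw [Finset.prod_insert hplB2]
      have hTl : T (p ℓ) = {cstar} := by simp [hT]
      have hTB : ∀ v ∈ B2, ((T v).card : ℝ) / s.q = 2 / s.q := by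
        intro v hv
        have hvl : v ≠ p ℓ := fun h => hplB2 (h ▸ hv)
        simp only [hT, if_neg hvl, if_pos hv]
        rw [Finset.card_insert_of_notMem (by simpa using hrb), Finset.card_singleton]
        norm_num
      rw [Finset.prod_congr rfl hTB, Finset.prod_const, hcardB2, hTl, Finset.card_singleton]
      norm_num
    rw [h1, h2, one_mul]
  rw [hprod]
  obtain ⟨k, rfl⟩ : ∃ k, ℓ = k + 1 := ⟨ℓ - 1, (Nat.succ_pred_eq_of_pos hℓ).symm⟩
  simp only [Nat.add_sub_cancel]
  refine le_of_eq ?_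
  field_simp
  ring
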